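/- arXiv:2206.08269 — 3 statements merged into one kernel-verified Lean document; each statement's English description precedes it below -/
import Mathlib

section
/- Let $A \subseteq \mathbb{R}^{d}$ be symmetric about the origin ($x \in A \iff -x \in A$), let $W \sim N(0, I_d)$, and define $\bar{W} = W \cdot \mathbf{1}\{W \in A\}$. Then $\bar{W}$ is zero-mean and $4$-sub-Gaussian: for every unit vector $u$ and every $\lambda \in \mathbb{R}$, $\mathbb{E}\exp(\lambda \langle u, \bar{W} \rangle) \leq \exp(2\lambda^2)$. -/
/-! The truncation `x ↦ 1_A(x) x` is odd when `A` is symmetric, so `W̄` has mean zero and,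
the Gaussian being symmetric, `𝔼 exp(λ⟨u, W̄⟩) = 𝔼 cosh(λ⟨u, W̄⟩)`. As `⟨u, W̄⟩` is either
`⟨u, W⟩` or `0`, and `cosh ≥ 1 = cosh 0`, this is at most
`𝔼 cosh(λ⟨u, W⟩) = 𝔼 exp(λ⟨u, W⟩) = exp(λ²/2)`. -/

open MeasureTheory ProbabilityTheory Real

theorem Function.Odd.indicator {α β : Type*} [Neg α] [NegZeroClass β] {f : α → β} (hf : f.Odd)
    {A : Set α} (hA : ∀ x, x ∈ A ↔ -x ∈ A) : (A.indicator f).Odd := fun x ↦ by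
  by_cases hx : x ∈ A
  · simp [hx, (hA x).mp hx, hf.eq x]
  · simp [hx, mt (hA x).mpr hx]

section NegInvariant

variable {E F : Type*} [MeasurableSpace E] [AddGroup E] [MeasurableNeg E] {μ : Measure E}
  [μ.IsNegInvariant] [NormedAddCommGroup F] [NormedSpace ℝ F]

theorem integral_eq_zero_of_odd {f : E → F} (hf : f.Odd) : ∫ x, f x ∂μ = 0 := by
  have h := integral_neg_eq_self f μ
  simp_rw [hf.eq, integral_neg] at h
  have h2 : (2 : ℝ) • ∫ x, f x ∂μ = 0 := by rw [two_smul]; nth_rw 1 [← h]; exact neg_add_cancel _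
  simpa using h2

theorem integral_exp_eq_integral_cosh_of_odd {g : E → ℝ} (hg : g.Odd)
    (hint : Integrable (fun x ↦ exp (g x)) μ) :
    ∫ x, exp (g x) ∂μ = ∫ x, cosh (g x) ∂μ := by
  have hneg : ∫ x, exp (-g x) ∂μ = ∫ x, exp (g x) ∂μ := by
    simpa only [hg.eq] using integral_neg_eq_self (fun x ↦ exp (g x)) μ
  have hint_neg : Integrable (fun x ↦ exp (-g x)) μ := by
    simpa only [hg.eq] using hint.comp_neg
  simp_rw [cosh_eq]
  rw [integral_div, integral_add hint hint_neg, hneg]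
  ring

theorem integral_exp_le_of_cosh_le {f g : E → ℝ} (hf : f.Odd) (hg : g.Odd)
    (hgm : AEStronglyMeasurable g μ) (hle : ∀ x, cosh (g x) ≤ cosh (f x))
    (hfi : Integrable (fun x ↦ exp (f x)) μ) :
    ∫ x, exp (g x) ∂μ ≤ ∫ x, exp (f x) ∂μ := by
  have hcosh_f : Integrable (fun x ↦ cosh (f x)) μ := by
    have hneg : Integrable (fun x ↦ exp (-f x)) μ := by simpa only [hf.eq] using hfi.comp_neg
    simp_rw [cosh_eq]
    exact (hfi.add hneg).div_const 2
  have hcosh_g : Integrable (fun x ↦ cosh (g x)) μ :=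
    hcosh_f.mono' (continuous_cosh.comp_aestronglyMeasurable hgm)
      (.of_forall fun x ↦ by rw [norm_of_nonneg (cosh_pos _).le]; exact hle x)
  have hexp_g : Integrable (fun x ↦ exp (g x)) μ :=
    (hcosh_g.const_mul 2).mono' (continuous_exp.comp_aestronglyMeasurable hgm)
      (.of_forall fun x ↦ by
        rw [norm_of_nonneg (exp_pos _).le, cosh_eq]
        linarith [exp_pos (-g x)])
  calc ∫ x, exp (g x) ∂μ = ∫ x, cosh (g x) ∂μ := integral_exp_eq_integral_cosh_of_odd hg hexp_g
    _ ≤ ∫ x, cosh (f x) ∂μ := integral_mono hcosh_g hcosh_f hle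
    _ = ∫ x, exp (f x) ∂μ := (integral_exp_eq_integral_cosh_of_odd hf hfi).symm

end NegInvariant

instance isNegInvariant_gaussianReal (v : NNReal) : (gaussianReal 0 v).IsNegInvariant :=
  ⟨by rw [Measure.neg_def, gaussianReal_map_neg, neg_zero]⟩

theorem mgf_sum_mul_pi_gaussianReal {ι : Type*} [Fintype ι] (u : ι → ℝ) (t : ℝ) :
    mgf (fun x : ι → ℝ ↦ ∑ i, u i * x i) (Measure.pi fun _ ↦ gaussianReal 0 1) t
      = exp ((∑ i, u i ^ 2) * t ^ 2 / 2) := by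
  have hind : iIndepFun (fun i (x : ι → ℝ) ↦ u i * x i) (Measure.pi fun _ ↦ gaussianReal 0 1) :=
    iIndepFun_pi (X := fun i a ↦ u i * a) fun i ↦ by fun_prop
  have hcoord : ∀ i, mgf (fun x : ι → ℝ ↦ u i * x i) (Measure.pi fun _ ↦ gaussianReal 0 1) t
      = exp (u i ^ 2 * t ^ 2 / 2) := fun i ↦ by
    rw [mgf_const_mul, mgf_gaussianReal (measurePreserving_eval _ i).map_eq]
    congr 1
    push_cast
    ring
  rw [← Finset.sum_fn, hind.mgf_sum (fun i ↦ by fun_prop),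
    Finset.prod_congr rfl fun i _ ↦ hcoord i, ← exp_sum, Finset.sum_mul, Finset.sum_div]

open MeasureTheory ProbabilityTheory Real Finset Classical in
theorem truncated_gaussian_subGaussian_general
    {Ω : Type*} [MeasurableSpace Ω] (P : Measure Ω)
    {d : ℕ} (W : Ω → (Fin d → ℝ)) (hWmeas : Measurable W)
    (hW : Measure.map W P = Measure.pi fun _ : Fin d => gaussianReal 0 1)
    (A : Set (Fin d → ℝ)) (hA_meas : MeasurableSet A)
    (hA_symm : ∀ x, x ∈ A ↔ -x ∈ A)
    (Wbar : Ω → (Fin d → ℝ))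
    (hWbar : ∀ ω, Wbar ω = if W ω ∈ A then W ω else 0) :
    (∀ i, ∫ ω, Wbar ω i ∂P = 0) ∧
    (∀ u : Fin d → ℝ, ∑ i, (u i) ^ 2 = 1 → ∀ lam : ℝ,
      ∫ ω, Real.exp (lam * ∑ i, u i * Wbar ω i) ∂P
        ≤ Real.exp (2 * lam ^ 2)) := by
  set μ := Measure.pi fun _ : Fin d => gaussianReal 0 1
  have htrunc_odd : (A.indicator id).Odd := Function.Odd.indicator (f := id) (fun _ ↦ rfl) hA_symm
  have htrunc_meas : Measurable (A.indicator id) := measurable_id.indicator hA_meas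
  have transfer (F : (Fin d → ℝ) → ℝ) (hF : Measurable F) :
      ∫ ω, F (Wbar ω) ∂P = ∫ x, F (A.indicator id x) ∂μ := by
    rw [← hW, integral_map (f := fun x ↦ F (A.indicator id x)) hWmeas.aemeasurable
      (hF.comp htrunc_meas).aestronglyMeasurable]
    simp [hWbar, Set.indicator_apply]
  refine ⟨fun i ↦ ?_, fun u hu lam ↦ ?_⟩
  · rw [transfer (fun x ↦ x i) (measurable_pi_apply i)]
    exact integral_eq_zero_of_odd fun x ↦ by simp only [htrunc_odd.eq x, Pi.neg_apply]
  set S : (Fin d → ℝ) → ℝ := fun x ↦ ∑ i, u i * x i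
  have hS_odd : (fun x ↦ lam * S x).Odd := fun x ↦ by simp [S]
  have hcosh (x) : cosh (lam * S (A.indicator id x)) ≤ cosh (lam * S x) := by
    by_cases hx : x ∈ A
    · simp [hx]
    · simp [hx, S, one_le_cosh]
  have hmgf : mgf S μ lam = exp (lam ^ 2 / 2) := by rw [mgf_sum_mul_pi_gaussianReal, hu, one_mul]
  rw [transfer (fun x ↦ exp (lam * S x)) (by fun_prop)]
  calc ∫ x, exp (lam * S (A.indicator id x)) ∂μ ≤ ∫ x, exp (lam * S x) ∂μ :=
        integral_exp_le_of_cosh_le hS_odd (hS_odd.comp_odd htrunc_odd) (by fun_prop) hcosh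
          (mgf_pos_iff.mp (hmgf ▸ exp_pos _))
    _ = exp (lam ^ 2 / 2) := hmgf
    _ ≤ exp (2 * lam ^ 2) := exp_le_exp.mpr (by nlinarith [sq_nonneg lam])

open MeasureTheory ProbabilityTheory Real Finset Classical in
/-- A symmetrically truncated standard Gaussian vector is zero-mean and
`4`-sub-Gaussian (Proposition `truncated_sub_gaussian_bound`). -/
theorem truncated_gaussian_subGaussian
    {Ω : Type*} [MeasurableSpace Ω] (P : Measure Ω) [IsProbabilityMeasure P]
    {d : ℕ} (W : Ω → (Fin d → ℝ)) (hWmeas : Measurable W)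
    (hW : Measure.map W P = Measure.pi fun _ : Fin d => gaussianReal 0 1)
    (A : Set (Fin d → ℝ)) (hA_meas : MeasurableSet A)
    (hA_symm : ∀ x, x ∈ A ↔ -x ∈ A)
    (Wbar : Ω → (Fin d → ℝ))
    (hWbar : ∀ ω, Wbar ω = if W ω ∈ A then W ω else 0) :
    (∀ i, ∫ ω, Wbar ω i ∂P = 0) ∧
    (∀ u : Fin d → ℝ, ∑ i, (u i) ^ 2 = 1 → ∀ lam : ℝ,
      ∫ ω, Real.exp (lam * ∑ i, u i * Wbar ω i) ∂P
        ≤ Real.exp (2 * lam ^ 2)) :=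
  truncated_gaussian_subGaussian_general P W hWmeas hW A hA_meas hA_symm Wbar hWbar
end

section
/- Let $A \subseteq \mathbb{R}^{d}$ be any measurable set, $W \sim N(0, I_d)$, and $\bar{W} = W \cdot \mathbf{1}\{W \in A\}$. If $\mathbf{P}(W \notin A) \leq 1/12$, then $\frac{1}{2} I \preccurlyeq \mathbb{E}[\bar{W}\bar{W}^\top] \preccurlyeq I$. -/
/-!
Only the real random variable `S = ⟨v, W⟩` matters, and it is `N(0, ‖v‖²)` because the
standard Gaussian measure is rotation invariant. Its moments are read off the
moment generating function `exp (‖v‖² t² / 2)`: `E[S²] = ‖v‖²` and `E[S⁴] = 3 ‖v‖⁴`.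
Truncation can only decrease `E[S²]`. Conversely, on the event `B = {W ∉ A}` the pointwise
AM-GM bound `S² ≤ c + S⁴ / (4c)` with `c = 3 ‖v‖²` gives
`E[S²; B] ≤ 3 ‖v‖² P(B) + ‖v‖² / 4 ≤ ‖v‖² / 2` when `P(B) ≤ 1/12`.
-/

open MeasureTheory ProbabilityTheory Real
open scoped ENNReal NNReal RealInnerProductSpace

section GaussianMoments

lemma hasDerivAt_mul_exp_mul_sq_div_two {v t p' : ℝ} {p : ℝ → ℝ} (hp : HasDerivAt p p' t) :
    HasDerivAt (fun t => p t * rexp (v * t ^ 2 / 2))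
      ((p' + v * t * p t) * rexp (v * t ^ 2 / 2)) t := by
  have he : HasDerivAt (fun t => rexp (v * t ^ 2 / 2)) (rexp (v * t ^ 2 / 2) * (v * t)) t := by
    convert (((hasDerivAt_pow 2 t).const_mul v).div_const 2).exp using 2
    push_cast; ring
  exact (hp.fun_mul he).congr_deriv (by ring)

lemma iteratedDeriv_two_exp_mul_sq_div_two (v : ℝ) :
    iteratedDeriv 2 (fun t => rexp (v * t ^ 2 / 2))
      = fun t => (v + v ^ 2 * t ^ 2) * rexp (v * t ^ 2 / 2) := by
  have d1 : deriv (fun t => rexp (v * t ^ 2 / 2)) = fun t => v * t * rexp (v * t ^ 2 / 2) := by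
    ext t
    simpa using (hasDerivAt_mul_exp_mul_sq_div_two (v := v) (hasDerivAt_const t (1 : ℝ))).deriv
  rw [iteratedDeriv_succ, iteratedDeriv_one, d1]
  ext t
  exact (hasDerivAt_mul_exp_mul_sq_div_two ((hasDerivAt_id' t).const_mul v)).deriv.trans
    (by ring)

lemma iteratedDeriv_four_exp_mul_sq_div_two_zero (v : ℝ) :
    iteratedDeriv 4 (fun t => rexp (v * t ^ 2 / 2)) 0 = 3 * v ^ 2 := by
  have d3 : deriv (fun t => (v + v ^ 2 * t ^ 2) * rexp (v * t ^ 2 / 2))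
      = fun t => (3 * v ^ 2 * t + v ^ 3 * t ^ 3) * rexp (v * t ^ 2 / 2) := by
    ext t
    convert (hasDerivAt_mul_exp_mul_sq_div_two
      (((hasDerivAt_pow 2 t).const_mul (v ^ 2)).const_add v)).deriv using 1
    push_cast; ring
  have d4 := hasDerivAt_mul_exp_mul_sq_div_two (v := v)
    (((hasDerivAt_id' 0).const_mul (3 * v ^ 2)).fun_add ((hasDerivAt_pow 3 0).const_mul (v ^ 3)))
  rw [iteratedDeriv_succ, iteratedDeriv_succ, iteratedDeriv_two_exp_mul_sq_div_two, d3,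
    d4.deriv]
  simp

variable {Ω : Type*} [MeasurableSpace Ω] {P : Measure Ω} [IsProbabilityMeasure P] {X : Ω → ℝ}
  {v : ℝ≥0}

lemma integrableExpSet_eq_univ_of_map_eq_gaussianReal {m : ℝ}
    (hX : P.map X = gaussianReal m v) : integrableExpSet X P = Set.univ := by
  ext t
  simp only [integrableExpSet, Set.mem_ofPred_eq, Set.mem_univ, iff_true, ← mgf_pos_iff]
  rw [mgf_gaussianReal hX]
  exact exp_pos _

lemma integral_pow_eq_iteratedDeriv_of_map_eq_gaussianReal (hX : P.map X = gaussianReal 0 v)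
    (n : ℕ) :
    ∫ ω, X ω ^ n ∂P = iteratedDeriv n (fun t => rexp (v * t ^ 2 / 2)) 0 := by
  have hmgf : mgf X P = fun t => rexp (v * t ^ 2 / 2) := by
    ext t
    simp [mgf_gaussianReal hX]
  have h0 : 0 ∈ interior (integrableExpSet X P) := by
    simp [integrableExpSet_eq_univ_of_map_eq_gaussianReal hX]
  rw [← hmgf, iteratedDeriv_mgf_zero h0]
  rfl

lemma integral_sq_of_map_eq_gaussianReal (hX : P.map X = gaussianReal 0 v) :
    ∫ ω, X ω ^ 2 ∂P = v := by
  simp [integral_pow_eq_iteratedDeriv_of_map_eq_gaussianReal hX,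
    iteratedDeriv_two_exp_mul_sq_div_two]

lemma integral_pow_four_of_map_eq_gaussianReal (hX : P.map X = gaussianReal 0 v) :
    ∫ ω, X ω ^ 4 ∂P = 3 * v ^ 2 := by
  rw [integral_pow_eq_iteratedDeriv_of_map_eq_gaussianReal hX,
    iteratedDeriv_four_exp_mul_sq_div_two_zero]

lemma integrable_pow_of_map_eq_gaussianReal {m : ℝ} (hX : P.map X = gaussianReal m v) (n : ℕ) :
    Integrable (fun ω => X ω ^ n) P :=
  integrable_pow_of_mem_interior_integrableExpSet
    (by simp [integrableExpSet_eq_univ_of_map_eq_gaussianReal hX]) n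

end GaussianMoments

lemma stdGaussian_map_inner {E : Type*} [NormedAddCommGroup E] [InnerProductSpace ℝ E]
    [FiniteDimensional ℝ E] [MeasurableSpace E] [BorelSpace E] (v : E) :
    (stdGaussian E).map (fun x => ⟪v, x⟫) = gaussianReal 0 (‖v‖₊ ^ 2) := by
  have h := IsGaussian.map_eq_gaussianReal (μ := stdGaussian E) (innerSL ℝ v)
  rw [integral_strongDual_stdGaussian, variance_dual_stdGaussian, innerSL_apply_norm] at h
  rwa [← coe_nnnorm, ← NNReal.coe_pow, Real.toNNReal_coe] at h

lemma pi_gaussianReal_map_sum_mul {ι : Type*} [Fintype ι] (v : ι → ℝ) :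
    (Measure.pi fun _ : ι => gaussianReal 0 1).map (fun x => ∑ i, v i * x i)
      = gaussianReal 0 (‖WithLp.toLp 2 v‖₊ ^ 2) := by
  rw [← stdGaussian_map_inner, ← map_pi_eq_stdGaussian,
    Measure.map_map (by fun_prop) (by fun_prop)]
  congr 1
  ext x
  simp [PiLp.inner_apply, mul_comm]

section Truncation

variable {Ω : Type*} [MeasurableSpace Ω] {μ : Measure Ω} [IsFiniteMeasure μ] {X : Ω → ℝ}
  {B : Set Ω}

lemma setIntegral_sq_le_add_integral_pow_four_div (h2 : Integrable (fun ω => X ω ^ 2) μ)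
    (h4 : Integrable (fun ω => X ω ^ 4) μ) (hB : MeasurableSet B) {c : ℝ} (hc : 0 < c) :
    ∫ ω in B, X ω ^ 2 ∂μ ≤ c * μ.real B + (∫ ω, X ω ^ 4 ∂μ) / (4 * c) := by
  have h4c : Integrable (fun ω => X ω ^ 4 / (4 * c)) μ := h4.div_const _
  have amgm : ∀ ω, X ω ^ 2 ≤ c + X ω ^ 4 / (4 * c) := fun ω => by
    rw [← sub_nonneg, show c + X ω ^ 4 / (4 * c) - X ω ^ 2 = (X ω ^ 2 - 2 * c) ^ 2 / (4 * c) by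
      field_simp; ring]
    positivity
  calc ∫ ω in B, X ω ^ 2 ∂μ ≤ ∫ ω in B, (c + X ω ^ 4 / (4 * c)) ∂μ :=
        setIntegral_mono_on h2.integrableOn ((integrable_const c).add h4c).integrableOn hB
          fun ω _ => amgm ω
    _ = c * μ.real B + ∫ ω in B, X ω ^ 4 / (4 * c) ∂μ := by
        rw [integral_add (integrable_const c) h4c.integrableOn, setIntegral_const, smul_eq_mul,
          mul_comm]
    _ ≤ c * μ.real B + (∫ ω, X ω ^ 4 ∂μ) / (4 * c) := by
        rw [integral_div]
        have := setIntegral_le_integral (s := B) h4 (ae_of_all _ fun ω => by positivity)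
        gcongr

lemma half_integral_sq_le_setIntegral_compl_sq (h2 : Integrable (fun ω => X ω ^ 2) μ)
    (h4 : Integrable (fun ω => X ω ^ 4) μ)
    (hX4 : ∫ ω, X ω ^ 4 ∂μ = 3 * (∫ ω, X ω ^ 2 ∂μ) ^ 2) (hB : MeasurableSet B)
    (hμB : μ.real B ≤ 1 / 12) :
    (∫ ω, X ω ^ 2 ∂μ) / 2 ≤ ∫ ω in Bᶜ, X ω ^ 2 ∂μ := by
  have hsplit := integral_add_compl hB h2
  set s := ∫ ω, X ω ^ 2 ∂μ
  obtain hs | hs := (show 0 ≤ s from integral_nonneg fun ω => sq_nonneg (X ω)).eq_or_lt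
  · rw [← hs, zero_div]
    exact setIntegral_nonneg hB.compl fun ω _ => sq_nonneg (X ω)
  have hB_le := setIntegral_sq_le_add_integral_pow_four_div h2 h4 hB (by positivity : 0 < 3 * s)
  rw [hX4, show 3 * s ^ 2 / (4 * (3 * s)) = s / 4 by field_simp] at hB_le
  nlinarith

end Truncation

open MeasureTheory ProbabilityTheory Real Finset Classical in
/-- A truncated standard Gaussian vector with truncation probability at most
`1/12` is approximately isotropic (Proposition
`trunc_gauss_approximate_isotropic`): `½ I ≼ E[W̄ W̄ᵀ] ≼ I` in the Loewner
order, stated via quadratic forms. -/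
theorem truncated_gaussian_approximately_isotropic
    {Ω : Type*} [MeasurableSpace Ω] (P : Measure Ω) [IsProbabilityMeasure P]
    {d : ℕ} (W : Ω → (Fin d → ℝ)) (hWmeas : Measurable W)
    (hW : Measure.map W P = Measure.pi fun _ : Fin d => gaussianReal 0 1)
    (A : Set (Fin d → ℝ)) (hA_meas : MeasurableSet A)
    (hA : P {ω | W ω ∉ A} ≤ ENNReal.ofReal (1 / 12))
    (Wbar : Ω → (Fin d → ℝ))
    (hWbar : ∀ ω, Wbar ω = if W ω ∈ A then W ω else 0) :
    ∀ v : Fin d → ℝ,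
      (1 / 2 : ℝ) * ∑ i, (v i) ^ 2 ≤ ∫ ω, (∑ i, v i * Wbar ω i) ^ 2 ∂P ∧
      ∫ ω, (∑ i, v i * Wbar ω i) ^ 2 ∂P ≤ ∑ i, (v i) ^ 2 := by
  intro v
  set S : Ω → ℝ := fun ω => ∑ i, v i * W ω i
  have hS : P.map S = gaussianReal 0 (‖WithLp.toLp 2 v‖₊ ^ 2) := by
    rw [← pi_gaussianReal_map_sum_mul, ← hW, Measure.map_map (by fun_prop) hWmeas]
    rfl
  have hS2 : ∫ ω, S ω ^ 2 ∂P = ∑ i, v i ^ 2 := by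
    rw [integral_sq_of_map_eq_gaussianReal hS, NNReal.coe_pow, coe_nnnorm,
      EuclideanSpace.real_norm_sq_eq]
  have hB : MeasurableSet {ω | W ω ∉ A} := hWmeas hA_meas.compl
  have htrunc : ∫ ω, (∑ i, v i * Wbar ω i) ^ 2 ∂P = ∫ ω in {ω | W ω ∉ A}ᶜ, S ω ^ 2 ∂P := by
    rw [← integral_indicator hB.compl]
    congr 1 with ω
    by_cases hω : W ω ∈ A <;> simp [hWbar, hω, S]
  rw [htrunc, ← hS2]
  refine ⟨?_, setIntegral_le_integral (integrable_pow_of_map_eq_gaussianReal hS 2)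
    (ae_of_all _ fun ω => sq_nonneg (S ω))⟩
  rw [one_div_mul_eq_div]
  refine half_integral_sq_le_setIntegral_compl_sq (integrable_pow_of_map_eq_gaussianReal hS 2)
    (integrable_pow_of_map_eq_gaussianReal hS 4) ?_ hB
    (ENNReal.toReal_le_of_le_ofReal (by norm_num) hA)
  rw [integral_pow_four_of_map_eq_gaussianReal hS, integral_sq_of_map_eq_gaussianReal hS]
end

section
/- Let $\mathscr{F}_\star$ be a star-shaped class of $B$-bounded functions (i.e., $f \in \mathscr{F}_\star$, $\gamma \in [0,1]$ implies $\gamma f \in \mathscr{F}_\star$), and fix $r > 0$. Suppose $\mathscr{F}_r \subseteq \partial B(r) = \{f \in \mathscr{F}_\star : \frac{1}{T}\sum_t\mathbb{E}\|f(X_t)\|_2^2 = r^2\}$ is an $r/\sqrt{8}$-net of $\partial B(r)$ in the supremum norm, and that on the event $\mathcal{E}^c$ every $f_i \in \mathscr{F}_r$ satisfies $\frac{1}{T}\sum_t\|f_i(X_t)\|_2^2 > \frac{1}{2}\cdot\frac{1}{T}\sum_t\mathbb{E}\|f_i(X_t)\|_2^2$. Then on $\mathcal{E}^c$, every $f \in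 \mathscr{F}_\star$ with $\frac{1}{T}\sum_t\mathbb{E}\|f(X_t)\|_2^2 \geq r^2$ satisfies $\frac{1}{T}\sum_{t=0}^{T-1}\|f(X_t)\|_2^2 \geq \frac{1}{8}\cdot\frac{1}{T}\sum_{t=0}^{T-1}\mathbb{E}\|f(X_t)\|_2^2$. -/
/-!
Rescale `f` onto the sphere `∂B(r)`: with `γ = r / √M`, where `M ≥ r²` is the mean square norm
of `f`, star-shapedness puts `γ • f` on the sphere, so some net element `fᵢ` is uniformly
`r/√8`-close to it. Pointwise `‖fᵢ‖² ≤ 2‖γ • f‖² + 2‖γ • f - fᵢ‖²`, so the empirical square norm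
of `γ • f` is at least half that of `fᵢ` minus `r²/8`, hence more than `r²/4 - r²/8 = γ²M/8`.
Both square norms are homogeneous of degree two, so dividing by `γ²` gives the bound for `f`.
-/

open MeasureTheory Finset

lemma half_sq_norm_sub_sq_norm_sub_le {E : Type*} [SeminormedAddCommGroup E] (u v : E) :
    (1 / 2 : ℝ) * ‖v‖ ^ 2 - ‖u - v‖ ^ 2 ≤ ‖u‖ ^ 2 := by
  have htri : ‖v‖ ≤ ‖u‖ + ‖u - v‖ := by
    simpa [norm_sub_rev] using norm_le_norm_add_norm_sub' v u
  nlinarith [norm_nonneg v, sq_nonneg (‖u‖ - ‖u - v‖)]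

lemma half_average_sq_norm_sub_le {ι E : Type*} [Fintype ι] [SeminormedAddCommGroup E]
    (u v : ι → E) {δ : ℝ} (hδ : ∀ i, ‖u i - v i‖ ≤ δ) :
    (1 / 2 : ℝ) * ((1 / Fintype.card ι : ℝ) * ∑ i, ‖v i‖ ^ 2) - δ ^ 2
      ≤ (1 / Fintype.card ι : ℝ) * ∑ i, ‖u i‖ ^ 2 := by
  have hpoint (i : ι) : (1 / 2 : ℝ) * ‖v i‖ ^ 2 - δ ^ 2 ≤ ‖u i‖ ^ 2 :=
    calc (1 / 2 : ℝ) * ‖v i‖ ^ 2 - δ ^ 2 ≤ (1 / 2 : ℝ) * ‖v i‖ ^ 2 - ‖u i - v i‖ ^ 2 := by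
          gcongr; exact hδ i
      _ ≤ ‖u i‖ ^ 2 := half_sq_norm_sub_sq_norm_sub_le (u i) (v i)
  have hsum : (1 / 2 : ℝ) * ∑ i, ‖v i‖ ^ 2 - Fintype.card ι * δ ^ 2 ≤ ∑ i, ‖u i‖ ^ 2 := by
    simpa [Finset.sum_sub_distrib, Finset.mul_sum] using
      Finset.sum_le_sum fun i (_ : i ∈ Finset.univ) => hpoint i
  have hcard : (1 / Fintype.card ι : ℝ) * (Fintype.card ι * δ ^ 2) ≤ δ ^ 2 := by
    rw [← mul_assoc, one_div_mul_eq_div]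
    exact mul_le_of_le_one_left (sq_nonneg δ) (div_self_le_one _)
  calc (1 / 2 : ℝ) * ((1 / Fintype.card ι : ℝ) * ∑ i, ‖v i‖ ^ 2) - δ ^ 2
      ≤ (1 / 2 : ℝ) * ((1 / Fintype.card ι : ℝ) * ∑ i, ‖v i‖ ^ 2)
          - (1 / Fintype.card ι : ℝ) * (Fintype.card ι * δ ^ 2) := by linarith
    _ = (1 / Fintype.card ι : ℝ) * ((1 / 2 : ℝ) * ∑ i, ‖v i‖ ^ 2 - Fintype.card ι * δ ^ 2) := by
          ring
    _ ≤ (1 / Fintype.card ι : ℝ) * ∑ i, ‖u i‖ ^ 2 := by gcongr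

lemma exists_mem_Ioc_sq_mul_eq_sq {r M : ℝ} (hr : 0 < r) (hM : r ^ 2 ≤ M) :
    ∃ γ ∈ Set.Ioc (0 : ℝ) 1, γ ^ 2 * M = r ^ 2 := by
  have hM_pos : 0 < M := (pow_pos hr 2).trans_le hM
  have hsM : 0 < Real.sqrt M := Real.sqrt_pos.mpr hM_pos
  refine ⟨r / Real.sqrt M, ⟨div_pos hr hsM, ?_⟩, ?_⟩
  · rw [div_le_one hsM]
    exact Real.le_sqrt_of_sq_le hM
  · rw [div_pow, Real.sq_sqrt hM_pos.le]
    field_simp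

section SquareNorms

variable {Ω 𝓧 E : Type*} [NormedAddCommGroup E] {T : ℕ}

noncomputable def empiricalSqNorm (X : Fin T → Ω → 𝓧) (ω : Ω) (f : 𝓧 → E) : ℝ :=
  (1 / T : ℝ) * ∑ t, ‖f (X t ω)‖ ^ 2

noncomputable def meanSqNorm [MeasurableSpace Ω] (P : Measure Ω) (X : Fin T → Ω → 𝓧)
    (f : 𝓧 → E) : ℝ :=
  (1 / T : ℝ) * ∑ t, ∫ ω, ‖f (X t ω)‖ ^ 2 ∂P

lemma norm_smul_apply_sq [NormedSpace ℝ E] (c : ℝ) (f : 𝓧 → E) (x : 𝓧) :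
    ‖(c • f) x‖ ^ 2 = c ^ 2 * ‖f x‖ ^ 2 := by
  rw [Pi.smul_apply, norm_smul, mul_pow, Real.norm_eq_abs, sq_abs]

lemma empiricalSqNorm_smul [NormedSpace ℝ E] (X : Fin T → Ω → 𝓧) (ω : Ω) (c : ℝ) (f : 𝓧 → E) :
    empiricalSqNorm X ω (c • f) = c ^ 2 * empiricalSqNorm X ω f := by
  simp only [empiricalSqNorm, norm_smul_apply_sq, ← Finset.mul_sum]
  ring

lemma meanSqNorm_smul [NormedSpace ℝ E] [MeasurableSpace Ω] (P : Measure Ω) (X : Fin T → Ω → 𝓧)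
    (c : ℝ) (f : 𝓧 → E) :
    meanSqNorm P X (c • f) = c ^ 2 * meanSqNorm P X f := by
  simp only [meanSqNorm, norm_smul_apply_sq, integral_const_mul, ← Finset.mul_sum]
  ring

lemma half_empiricalSqNorm_sub_le (X : Fin T → Ω → 𝓧) (ω : Ω) {f g : 𝓧 → E} {δ : ℝ}
    (hδ : ∀ x, ‖g x - f x‖ ≤ δ) :
    (1 / 2 : ℝ) * empiricalSqNorm X ω f - δ ^ 2 ≤ empiricalSqNorm X ω g := by
  simpa [empiricalSqNorm, Fintype.card_fin] using
    half_average_sq_norm_sub_le (fun t => g (X t ω)) (fun t => f (X t ω)) fun t => hδ (X t ω)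

end SquareNorms

theorem lower_isometry_from_net_general
    {Ω 𝓧 : Type*} [MeasurableSpace Ω]
    {E : Type*} [NormedAddCommGroup E] [NormedSpace ℝ E]
    (P : Measure Ω)
    {T : ℕ} (X : Fin T → Ω → 𝓧)
    (Fstar : Set (𝓧 → E)) (r : ℝ) (hr : 0 < r)
    (hstar : ∀ f ∈ Fstar, ∀ γ : ℝ, 0 ≤ γ → γ ≤ 1 → (γ • f) ∈ Fstar)
    (Fr : Set (𝓧 → E))
    (hFr_sub : Fr ⊆ {f ∈ Fstar |
      (1 / T : ℝ) * ∑ t, ∫ ω, ‖f (X t ω)‖ ^ 2 ∂P = r ^ 2})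
    (hnet : ∀ f ∈ Fstar,
      (1 / T : ℝ) * ∑ t, ∫ ω, ‖f (X t ω)‖ ^ 2 ∂P = r ^ 2 →
      ∃ fi ∈ Fr, ∀ x, ‖f x - fi x‖ ≤ r / Real.sqrt 8)
    (ω : Ω)
    -- `ω` lies in the complement of the bad event: every net element
    -- satisfies the one-sided empirical lower bound
    (hω : ∀ fi ∈ Fr,
      (1 / 2 : ℝ) * ((1 / T : ℝ) * ∑ t, ∫ ω', ‖fi (X t ω')‖ ^ 2 ∂P)
        < (1 / T : ℝ) * ∑ t, ‖fi (X t ω)‖ ^ 2) :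
    ∀ f ∈ Fstar,
      r ^ 2 ≤ (1 / T : ℝ) * ∑ t, ∫ ω', ‖f (X t ω')‖ ^ 2 ∂P →
      (1 / 8 : ℝ) * ((1 / T : ℝ) * ∑ t, ∫ ω', ‖f (X t ω')‖ ^ 2 ∂P)
        ≤ (1 / T : ℝ) * ∑ t, ‖f (X t ω)‖ ^ 2 := by
  intro f hf hM
  change r ^ 2 ≤ meanSqNorm P X f at hM
  change 1 / 8 * meanSqNorm P X f ≤ empiricalSqNorm X ω f
  obtain ⟨γ, ⟨hγ_pos, hγ_le⟩, hγM⟩ := exists_mem_Ioc_sq_mul_eq_sq hr hM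
  have hg_sphere : meanSqNorm P X (γ • f) = r ^ 2 := by rw [meanSqNorm_smul, hγM]
  obtain ⟨fi, hfi, hclose⟩ := hnet _ (hstar f hf γ hγ_pos.le hγ_le) hg_sphere
  have hfi_emp : 1 / 2 * r ^ 2 < empiricalSqNorm X ω fi := by
    have h := hω fi hfi
    rw [(hFr_sub hfi).2] at h
    exact h
  have hg_emp := half_empiricalSqNorm_sub_le X ω hclose
  rw [div_pow, Real.sq_sqrt (by norm_num), empiricalSqNorm_smul] at hg_emp
  refine le_of_mul_le_mul_left ?_ (pow_pos hγ_pos 2)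
  linarith

/-- Deterministic core of the lower-isometry theorem (Theorem `lucemthm`):
on the complement of the bad event, lower isometry on an `r/√8`-net of the
sphere `∂B(r)` propagates, by star-shapedness and a parallelogram-type
inequality, to all functions outside the ball `B(r)`. -/
theorem lower_isometry_from_net
    {Ω 𝓧 : Type*} [MeasurableSpace Ω] [MeasurableSpace 𝓧]
    {E : Type*} [NormedAddCommGroup E] [NormedSpace ℝ E]
    (P : Measure Ω) [IsProbabilityMeasure P]
    {T : ℕ} (hT : 0 < T) (X : Fin T → Ω → 𝓧)
    (Fstar : Set (𝓧 → E)) (B r : ℝ) (hB : 0 < B) (hr : 0 < r)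
    (hstar : ∀ f ∈ Fstar, ∀ γ : ℝ, 0 ≤ γ → γ ≤ 1 → (γ • f) ∈ Fstar)
    (hbound : ∀ f ∈ Fstar, ∀ x, ‖f x‖ ≤ B)
    (Fr : Set (𝓧 → E))
    (hFr_sub : Fr ⊆ {f ∈ Fstar |
      (1 / T : ℝ) * ∑ t, ∫ ω, ‖f (X t ω)‖ ^ 2 ∂P = r ^ 2})
    (hnet : ∀ f ∈ Fstar,
      (1 / T : ℝ) * ∑ t, ∫ ω, ‖f (X t ω)‖ ^ 2 ∂P = r ^ 2 →
      ∃ fi ∈ Fr, ∀ x, ‖f x - fi x‖ ≤ r / Real.sqrt 8)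
    (ω : Ω)
    -- `ω` lies in the complement of the bad event: every net element
    -- satisfies the one-sided empirical lower bound
    (hω : ∀ fi ∈ Fr,
      (1 / 2 : ℝ) * ((1 / T : ℝ) * ∑ t, ∫ ω', ‖fi (X t ω')‖ ^ 2 ∂P)
        < (1 / T : ℝ) * ∑ t, ‖fi (X t ω)‖ ^ 2) :
    ∀ f ∈ Fstar,
      r ^ 2 ≤ (1 / T : ℝ) * ∑ t, ∫ ω', ‖f (X t ω')‖ ^ 2 ∂P →
      (1 / 8 : ℝ) * ((1 / T : ℝ) * ∑ t, ∫ ω', ‖f (X t ω')‖ ^ 2 ∂P)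
        ≤ (1 / T : ℝ) * ∑ t, ‖f (X t ω)‖ ^ 2 :=
  lower_isometry_from_net_general P X Fstar r hr hstar Fr hFr_sub hnet ω hω
end
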